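/- Let ν be a rational number with 0 ≤ ν < 1/e and let N ≥ 0 be an integer. Let a ∈ 𝔖_ν be a unit of the ring 𝔖_ν. If the product a·E(u)^N lies in 𝔖 = O_{K0}[[u]] (i.e. all its coefficients lie in O_{K0}), then a itself lies in 𝔖 and is a unit of the ring O_{K0}[[u]]. -/

import Mathlib

noncomputable section

open PowerSeries

variable (p : ℕ) [hp : Fact p.Prime] (k : Type) [Field k] [CharP k p] [PerfectRing k p]

/-- `K₀`, the fraction field of the ring of Witt vectors `W(k)`. -/
abbrev K₀ : Type := FractionRing (WittVector p k)

/-- The inclusion `O_{K₀} = W(k) → K₀`. -/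
def ι : WittVector p k →+* K₀ p k := algebraMap _ _

/-- `valGE c a` says `val a ≥ c`, for the valuation `val` on `K₀` normalized by `val p = 1`
(whose ring of integers is `W(k)`). -/
def valGE (c : ℝ) (a : K₀ p k) : Prop :=
  ∃ w : WittVector p k, a = (p : K₀ p k) ^ ⌈c⌉ * ι p k w

/-- Membership in `𝔖_ν`: all coefficients satisfy `val (a i) + ν·i ≥ 0`. -/
def memS (ν : ℝ) (f : PowerSeries (K₀ p k)) : Prop :=
  ∀ i : ℕ, valGE p k (-(ν * i)) (PowerSeries.coeff i f)

/-- Membership in `ℰ⁺_ν = 𝔖_ν[1/p]`. -/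
def memE (ν : ℝ) (f : PowerSeries (K₀ p k)) : Prop :=
  ∃ n : ℕ, memS p k ν (PowerSeries.C ((p : K₀ p k) ^ n) * f)

/-- The Frobenius `σ` on `K₀`, extending the Witt vector Frobenius. -/
def σ : K₀ p k →+* K₀ p k :=
  IsFractionRing.lift (g := (ι p k).comp (WittVector.frobeniusEquiv p k).toRingHom)
    (by rw [RingHom.coe_comp]
        exact (IsFractionRing.injective (WittVector p k) (K₀ p k)).comp
          (WittVector.frobeniusEquiv p k).injective)

/-- The Frobenius `φ` on `K₀[[u]]`: `Σ a_i u^i ↦ Σ σ(a_i) u^{p·i}`. -/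
def φps (f : PowerSeries (K₀ p k)) : PowerSeries (K₀ p k) :=
  PowerSeries.mk fun i => if p ∣ i then σ p k (PowerSeries.coeff (i / p) f) else 0

/-- `E(u)` regarded as a power series over `K₀`. -/
def ES (E : Polynomial (WittVector p k)) : PowerSeries (K₀ p k) :=
  ((E.map (ι p k) : Polynomial (K₀ p k)) : PowerSeries (K₀ p k))

set_option linter.unusedSectionVars false

section Helpers

variable {p : ℕ} [hp : Fact p.Prime] {k : Type} [Field k] [CharP k p] [PerfectRing k p]

/-- `V n x` : `val x ≥ n`, with integer `n`. -/
def V (n : ℤ) (x : K₀ p k) : Prop := ∃ w : WittVector p k, x = (p : K₀ p k) ^ n * ι p k w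

lemma iota_inj : Function.Injective (ι p k) :=
  IsFractionRing.injective (WittVector p k) (K₀ p k)

lemma iota_p : ((p : ℕ) : K₀ p k) = ι p k (p : WittVector p k) := (map_natCast (ι p k) p).symm

lemma p_ne_zero' : (p : K₀ p k) ≠ 0 := by
  rw [iota_p]
  intro h
  exact WittVector.p_nonzero p k (iota_inj (by rw [h, map_zero]))

lemma V_mono {m n : ℤ} (h : m ≤ n) {x : K₀ p k} : V n x → V m x := by
  rintro ⟨w, rfl⟩
  obtain ⟨d, rfl⟩ : ∃ d : ℕ, n = m + d := ⟨(n - m).toNat, by omega⟩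
  refine ⟨(p : WittVector p k) ^ d * w, ?_⟩
  rw [map_mul, map_pow, zpow_add₀ p_ne_zero', mul_assoc, ← iota_p, zpow_natCast]

lemma V_zero' (n : ℤ) : V n (0 : K₀ p k) := ⟨0, by simp⟩

lemma V_add {n : ℤ} {x y : K₀ p k} (hx : V n x) (hy : V n y) : V n (x + y) := by
  obtain ⟨w1, rfl⟩ := hx; obtain ⟨w2, rfl⟩ := hy
  exact ⟨w1 + w2, by rw [map_add, mul_add]⟩

lemma V_neg {n : ℤ} {x : K₀ p k} (hx : V n x) : V n (-x) := by
  obtain ⟨w1, rfl⟩ := hx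
  exact ⟨-w1, by rw [map_neg, mul_neg]⟩

lemma V_sub {n : ℤ} {x y : K₀ p k} (hx : V n x) (hy : V n y) : V n (x - y) := by
  rw [sub_eq_add_neg]; exact V_add hx (V_neg hy)

lemma V_sum {n : ℤ} {γ : Type} (s : Finset γ) (f : γ → K₀ p k)
    (h : ∀ j ∈ s, V n (f j)) : V n (∑ j ∈ s, f j) := by
  classical
  induction s using Finset.induction_on with
  | empty => simpa using V_zero' n
  | @insert c s' hni ih =>
    rw [Finset.sum_insert hni]
    exact V_add (h c (Finset.mem_insert_self c s'))
      (ih fun j hj => h j (Finset.mem_insert_of_mem hj))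

lemma V_mul_iota {n : ℤ} {x : K₀ p k} (w : WittVector p k) (hx : V n x) :
    V n (x * ι p k w) := by
  obtain ⟨w1, rfl⟩ := hx
  exact ⟨w1 * w, by rw [map_mul, mul_assoc]⟩

lemma V_p_mul {n : ℤ} {x : K₀ p k} (hx : V n x) : V (n + 1) ((p : K₀ p k) * x) := by
  obtain ⟨w1, rfl⟩ := hx
  exact ⟨w1, by rw [zpow_add_one₀ p_ne_zero']; ring⟩

lemma V_p_cancel {n : ℤ} {x : K₀ p k} (h : V (n + 1) ((p : K₀ p k) * x)) : V n x := by
  obtain ⟨w, hw⟩ := h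
  exact ⟨w, mul_left_cancel₀ p_ne_zero' (by rw [hw, zpow_add_one₀ p_ne_zero']; ring)⟩

lemma V_unit_cancel {n : ℤ} {x : K₀ p k} {w : WittVector p k} (hu : IsUnit w)
    (h : V n (x * ι p k w)) : V n x := by
  obtain ⟨u, rfl⟩ := hu
  obtain ⟨w', hw⟩ := h
  refine ⟨w' * ↑u⁻¹, ?_⟩
  rw [map_mul, ← mul_assoc, ← hw, mul_assoc, ← map_mul, Units.mul_inv, map_one, mul_one]

lemma V_zero_iff {x : K₀ p k} : V 0 x ↔ ∃ w, x = ι p k w := by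
  simp [V]

lemma memS_zero_iff {f : PowerSeries (K₀ p k)} :
    memS p k 0 f ↔ ∀ n : ℕ, V 0 (PowerSeries.coeff n f) := by
  simp [memS, valGE, V]

lemma valGE_V {c : ℝ} {x : K₀ p k} (h : valGE p k c x) : V ⌈c⌉ x := h

end Helpers

section Helpers2

set_option linter.unusedSectionVars false

variable {p : ℕ} [hp : Fact p.Prime] {k : Type} [Field k] [CharP k p] [PerfectRing k p]

lemma ES_coeff (E : Polynomial (WittVector p k)) (n : ℕ) :
    PowerSeries.coeff n (ES p k E) = ι p k (E.coeff n) := by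
  rw [ES, Polynomial.coeff_coe, Polynomial.coeff_map]

lemma coeff_mul_ES (a : PowerSeries (K₀ p k)) (E : Polynomial (WittVector p k)) (n : ℕ) :
    PowerSeries.coeff n (a * ES p k E) =
      ∑ j ∈ Finset.range (n + 1),
        PowerSeries.coeff j a * ι p k (E.coeff (n - j)) := by
  rw [PowerSeries.coeff_mul, Finset.Nat.sum_antidiagonal_eq_sum_range_succ_mk]
  exact Finset.sum_congr rfl fun j _ => by rw [ES_coeff]

lemma memS_mul0 {ν : ℝ} (hν : 0 ≤ ν) {f g : PowerSeries (K₀ p k)}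
    (hf : memS p k ν f) (hg : memS p k 0 g) : memS p k ν (f * g) := by
  rw [memS_zero_iff] at hg
  intro n
  show V ⌈-(ν * n)⌉ _
  rw [PowerSeries.coeff_mul, Finset.Nat.sum_antidiagonal_eq_sum_range_succ_mk]
  refine V_sum _ _ fun j hj => ?_
  obtain ⟨w, hw⟩ := V_zero_iff.mp (hg (n - j))
  rw [hw]
  refine V_mul_iota w (V_mono ?_ (valGE_V (hf j)))
  have hjn : (j : ℝ) ≤ (n : ℝ) := by
    exact_mod_cast Nat.le_of_lt_succ (Finset.mem_range.mp hj)
  exact Int.ceil_le_ceil (neg_le_neg (mul_le_mul_of_nonneg_left hjn hν))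

lemma memS0_mul {f g : PowerSeries (K₀ p k)}
    (hf : memS p k 0 f) (hg : memS p k 0 g) : memS p k 0 (f * g) :=
  memS_mul0 le_rfl hf hg

lemma memS0_one : memS p k 0 (1 : PowerSeries (K₀ p k)) := by
  rw [memS_zero_iff]
  intro n
  rw [PowerSeries.coeff_one]
  split
  · exact ⟨1, by simp⟩
  · exact ⟨0, by simp⟩

lemma memS0_ES (E : Polynomial (WittVector p k)) : memS p k 0 (ES p k E) := by
  rw [memS_zero_iff]
  intro n
  rw [ES_coeff]
  exact V_zero_iff.mpr ⟨E.coeff n, rfl⟩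

lemma memS0_ES_pow (E : Polynomial (WittVector p k)) (N : ℕ) :
    memS p k 0 (ES p k E ^ N) := by
  induction N with
  | zero => simpa using memS0_one
  | succ N ih => rw [pow_succ]; exact memS0_mul ih (memS0_ES E)

lemma unit_of_not_p_dvd {c : WittVector p k} (h : ¬ (p : WittVector p k) ∣ c) :
    IsUnit c := by
  by_contra hc
  haveI := WittVector.isDiscreteValuationRing (p := p) (k := k)
  refine h (Ideal.mem_span_singleton.mp ?_)
  rw [← (WittVector.irreducible p (k := k)).maximalIdeal_eq]
  exact (IsLocalRing.mem_maximalIdeal c).mpr hc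

end Helpers2

section KeyLemma

set_option linter.unusedSectionVars false
set_option maxHeartbeats 1000000

variable {p : ℕ} [hp : Fact p.Prime] {k : Type} [Field k] [CharP k p] [PerfectRing k p]

lemma key_step (e : ℕ) (he : 1 ≤ e) (E : Polynomial (WittVector p k))
    (hE_monic : E.Monic) (hE_deg : E.natDegree = e)
    (hE_coeff : ∀ j < e, ∃ c, E.coeff j = p * c)
    (hE_zero : ¬ ∃ c, E.coeff 0 = (p : WittVector p k) ^ 2 * c)
    (ν : ℚ) (hν0 : 0 ≤ ν) (hν1 : ν < 1 / (e : ℚ))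
    (a : PowerSeries (K₀ p k)) (ha : memS p k (ν : ℝ) a)
    (hprod : memS p k 0 (a * ES p k E)) : memS p k 0 a := by
  classical
  obtain ⟨c0, hc0⟩ := hE_coeff 0 he
  have hc0u : IsUnit c0 := by
    refine unit_of_not_p_dvd fun hdvd => ?_
    obtain ⟨d, hd⟩ := hdvd
    exact hE_zero ⟨d, by rw [hc0, hd]; ring⟩
  have hrel : ∀ n : ℕ, (p : K₀ p k) * (PowerSeries.coeff n a * ι p k c0)
      = PowerSeries.coeff n (a * ES p k E)
        - ∑ j ∈ Finset.range n,
            PowerSeries.coeff j a * ι p k (E.coeff (n - j)) := by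
    intro n
    rw [coeff_mul_ES, Finset.sum_range_succ, Nat.sub_self, hc0, map_mul, ← iota_p]
    ring
  have showV : ∀ (n : ℕ) (m : ℤ),
      V (m + 1) (PowerSeries.coeff n (a * ES p k E)
        - ∑ j ∈ Finset.range n,
            PowerSeries.coeff j a * ι p k (E.coeff (n - j))) →
      V m (PowerSeries.coeff n a) := by
    intro n m h
    rw [← hrel] at h
    exact V_unit_cancel hc0u (V_p_cancel h)
  rw [memS_zero_iff]
  by_contra hbad
  push_neg at hbad
  set i := Nat.find hbad with hidef
  have hibad : ¬ V 0 (PowerSeries.coeff i a) := Nat.find_spec hbad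
  have hmin : ∀ j, j < i → V 0 (PowerSeries.coeff j a) := fun j hj =>
    not_not.mp (Nat.find_min hbad hj)
  -- Claim A: valuation lower bound
  have A : ∀ j : ℕ, V (if j < i then 0 else -(1 + (((j - i) / e : ℕ) : ℤ)))
      (PowerSeries.coeff j a) := by
    intro j
    induction j using Nat.strong_induction_on with
    | _ j IH =>
      by_cases hji : j < i
      · simpa [hji] using hmin j hji
      · rw [if_neg hji]
        push_neg at hji
        refine showV j _ ?_
        have harith : (-(1 + (((j - i) / e : ℕ) : ℤ)) + 1) = -(((j - i) / e : ℕ) : ℤ) := by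
          ring
        rw [harith]
        refine V_sub (V_mono (neg_nonpos.mpr (Int.natCast_nonneg _)) (memS_zero_iff.mp hprod j)) ?_
        refine V_sum _ _ fun j' hj' => ?_
        have hj'j : j' < j := Finset.mem_range.mp hj'
        by_cases h1 : e < j - j'
        · rw [Polynomial.coeff_eq_zero_of_natDegree_lt (by omega), map_zero, mul_zero]
          exact V_zero' _
        · push_neg at h1
          have hb := IH j' hj'j
          have hEe : E.coeff e = 1 := by rw [← hE_deg]; exact hE_monic.coeff_natDegree
          by_cases h2 : j - j' = e
          · rw [h2, hEe, map_one, mul_one]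
            refine V_mono ?_ hb
            by_cases h3 : j' < i
            · rw [if_pos h3]
              exact neg_nonpos.mpr (Int.natCast_nonneg _)
            · rw [if_neg h3]
              push_neg at h3
              have hdd : j - i = (j' - i) + e := by omega
              have hdiv : (j - i) / e = (j' - i) / e + 1 := by
                rw [hdd, Nat.add_div_right _ (by omega : 0 < e)]
              rw [hdiv]
              apply le_of_eq
              push_cast
              ring
          · obtain ⟨cy, hcy⟩ := hE_coeff (j - j') (by omega)
            rw [hcy, map_mul, ← iota_p]
            have hring : PowerSeries.coeff j' a * ((p : K₀ p k) * ι p k cy)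
                = (p : K₀ p k) * (PowerSeries.coeff j' a * ι p k cy) := by ring
            rw [hring]
            have step : V (-(((j - i) / e : ℕ) : ℤ) - 1)
                (PowerSeries.coeff j' a * ι p k cy) := by
              refine V_mono ?_ (V_mul_iota cy hb)
              by_cases h3 : j' < i
              · rw [if_pos h3]
                have hz : (0 : ℤ) ≤ (((j - i) / e : ℕ) : ℤ) := Int.natCast_nonneg _
                linarith
              · rw [if_neg h3]
                push_neg at h3
                have hdiv : (((j' - i) / e : ℕ) : ℤ) ≤ (((j - i) / e : ℕ) : ℤ) :=
                  Int.ofNat_le.mpr (Nat.div_le_div_right (by omega))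
                linarith
            have h4 := V_p_mul step
            rw [sub_add_cancel] at h4
            exact h4
  -- Claim B: exact decay along the arithmetic progression
  have B : ∀ q : ℕ, ¬ V (-(q : ℤ)) (PowerSeries.coeff (i + q * e) a) := by
    intro q
    induction q with
    | zero => simpa using hibad
    | succ q IHq =>
      intro hV
      apply IHq
      set n := i + (q + 1) * e with hn
      have hqe : (q + 1) * e = q * e + e := by ring
      have hiqe : i + q * e ∈ Finset.range n := Finset.mem_range.mpr (by omega)
      have hsplit : PowerSeries.coeff (i + q * e) a
          = PowerSeries.coeff n (a * ES p k E)
            - ∑ j ∈ (Finset.range n).erase (i + q * e),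
                PowerSeries.coeff j a * ι p k (E.coeff (n - j))
            - PowerSeries.coeff n a * ι p k (E.coeff 0) := by
        have h1 := coeff_mul_ES a E n
        rw [Finset.sum_range_succ, Nat.sub_self] at h1
        rw [← Finset.add_sum_erase _ _ hiqe] at h1
        have h2 : n - (i + q * e) = e := by omega
        have hEe : E.coeff e = 1 := by rw [← hE_deg]; exact hE_monic.coeff_natDegree
        rw [h2, hEe, map_one, mul_one] at h1
        linear_combination -h1
      rw [hsplit]
      refine V_sub (V_sub ?_ ?_) ?_
      · exact V_mono (by omega) (memS_zero_iff.mp hprod n)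
      · refine V_sum _ _ fun j hj => ?_
        obtain ⟨hjne, hjr⟩ := Finset.mem_erase.mp hj
        have hjn : j < n := Finset.mem_range.mp hjr
        by_cases h1 : e < n - j
        · rw [Polynomial.coeff_eq_zero_of_natDegree_lt (by omega), map_zero, mul_zero]
          exact V_zero' _
        · push_neg at h1
          have hne : n - j ≠ e := by omega
          have hji : ¬ j < i := by omega
          obtain ⟨cy, hcy⟩ := hE_coeff (n - j) (by omega)
          rw [hcy, map_mul, ← iota_p]
          have hring : PowerSeries.coeff j a * ((p : K₀ p k) * ι p k cy)
              = (p : K₀ p k) * (PowerSeries.coeff j a * ι p k cy) := by ring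
          rw [hring]
          have hdiv : (j - i) / e = q := by
            refine Nat.div_eq_of_lt_le (by omega) (by omega)
          have hA := A j
          rw [if_neg hji, hdiv] at hA
          have h5 := V_p_mul (V_mul_iota cy hA)
          refine V_mono ?_ h5
          omega
      · rw [hc0, map_mul, ← iota_p]
        have hring : PowerSeries.coeff n a * ((p : K₀ p k) * ι p k c0)
            = (p : K₀ p k) * (PowerSeries.coeff n a * ι p k c0) := by ring
        rw [hring]
        have h5 := V_p_mul (V_mul_iota c0 hV)
        refine V_mono ?_ h5
        push_cast
        omega
  -- the contradiction with membership in 𝔖_ν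
  have hepos : (0 : ℚ) < (e : ℚ) := by exact_mod_cast he
  have hνe : ν * e < 1 := by
    have h := mul_lt_mul_of_pos_right hν1 hepos
    rwa [one_div, inv_mul_cancel₀ (ne_of_gt hepos)] at h
  set q : ℕ := ⌈(ν * i) / (1 - ν * e)⌉₊ with hqdef
  have h3 : (0 : ℚ) < 1 - ν * e := by linarith
  have h1 : ν * i ≤ q * (1 - ν * e) := by
    have h2 : (ν * i) / (1 - ν * e) ≤ (q : ℚ) := Nat.le_ceil _
    calc ν * i = (ν * i) / (1 - ν * e) * (1 - ν * e) := by field_simp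
    _ ≤ q * (1 - ν * e) := mul_le_mul_of_nonneg_right h2 (le_of_lt h3)
  have hineq : (ν : ℚ) * ((i : ℚ) + (q : ℚ) * (e : ℚ)) ≤ (q : ℚ) := by nlinarith
  have hmem := ha (i + q * e)
  have hR : ((ν : ℝ)) * (((i + q * e : ℕ)) : ℝ) ≤ ((q : ℕ) : ℝ) := by
    push_cast
    exact_mod_cast hineq
  have hceil : (-(q : ℤ)) ≤ ⌈-((ν : ℝ) * (((i + q * e : ℕ)) : ℝ))⌉ := by
    have hle : ((-(q : ℤ)) : ℝ) ≤ -((ν : ℝ) * (((i + q * e : ℕ)) : ℝ)) := by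
      push_cast
      push_cast at hR
      linarith
    have h6 := Int.ceil_mono hle
    rwa [← Int.cast_neg, Int.ceil_intCast] at h6
  exact B q (V_mono hceil (valGE_V hmem))

end KeyLemma


theorem stmt15 (p : ℕ) [Fact p.Prime] (k : Type) [Field k] [CharP k p] [PerfectRing k p]
    (e : ℕ) (he : 1 ≤ e) (E : Polynomial (WittVector p k))
    (hE_monic : E.Monic) (hE_deg : E.natDegree = e)
    (hE_coeff : ∀ j < e, ∃ c, E.coeff j = p * c)
    (hE_zero : ¬ ∃ c, E.coeff 0 = (p : WittVector p k) ^ 2 * c)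
    (N : ℕ)
    (ν : ℚ) (hν0 : 0 ≤ ν) (hν1 : ν < 1 / (e : ℚ))
    (a : PowerSeries (K₀ p k)) (ha : memS p k (ν : ℝ) a)
    (haunit : ∃ b, memS p k (ν : ℝ) b ∧ a * b = 1)
    (hprod : memS p k 0 (a * (ES p k E) ^ N)) :
    memS p k 0 a ∧ ∃ b, memS p k 0 b ∧ a * b = 1 := by
  classical
  have hν0' : (0 : ℝ) ≤ (ν : ℝ) := by exact_mod_cast hν0
  have main : ∀ (M : ℕ) (f : PowerSeries (K₀ p k)), memS p k (ν : ℝ) f →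
      memS p k 0 (f * ES p k E ^ M) → memS p k 0 f := by
    intro M
    induction M with
    | zero => intro f _ h; simpa using h
    | succ M IH =>
      intro f hf h
      refine IH f hf ?_
      refine key_step e he E hE_monic hE_deg hE_coeff hE_zero ν hν0 hν1
        (f * ES p k E ^ M) (memS_mul0 hν0' hf (memS0_ES_pow E M)) ?_
      have : f * ES p k E ^ M * ES p k E = f * ES p k E ^ (M + 1) := by
        rw [pow_succ, mul_assoc]
      rwa [this]
  have hS0a : memS p k 0 a := main N a ha hprod
  obtain ⟨b, hbν, hab⟩ := haunit
  obtain ⟨w0, hw0⟩ := V_zero_iff.mp (memS_zero_iff.mp hS0a 0)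
  have hb0 : V 0 (PowerSeries.coeff 0 b) := by
    have hcast : (⌈-((ν : ℝ) * ((0 : ℕ) : ℝ))⌉) = 0 := by simp
    exact V_mono (le_of_eq hcast.symm) (valGE_V (hbν 0))
  obtain ⟨w0', hw0'⟩ := V_zero_iff.mp hb0
  have hunit : IsUnit w0 := by
    have h00 : PowerSeries.coeff 0 a * PowerSeries.coeff 0 b = 1 := by
      have h := congrArg (PowerSeries.constantCoeff) hab
      simpa [← PowerSeries.coeff_zero_eq_constantCoeff, map_mul] using h
    have heq : ι p k (w0 * w0') = ι p k 1 := by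
      rw [map_mul, map_one, ← hw0, ← hw0', h00]
    exact IsUnit.of_mul_eq_one _ (iota_inj heq)
  have hSb : ∀ n, V 0 (PowerSeries.coeff n b) := by
    intro n
    induction n using Nat.strong_induction_on with
    | _ n IH =>
      have hco : PowerSeries.coeff n (1 : PowerSeries (K₀ p k))
          = ∑ j ∈ Finset.range (n + 1),
              PowerSeries.coeff j a * PowerSeries.coeff (n - j) b := by
        rw [← hab, PowerSeries.coeff_mul, Finset.Nat.sum_antidiagonal_eq_sum_range_succ_mk]
      rw [Finset.sum_range_succ'] at hco
      have hsol : PowerSeries.coeff 0 a * PowerSeries.coeff n b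
          = PowerSeries.coeff n (1 : PowerSeries (K₀ p k))
            - ∑ j ∈ Finset.range n,
                PowerSeries.coeff (j + 1) a
                  * PowerSeries.coeff (n - (j + 1)) b := by
        rw [hco, Nat.sub_zero]
        ring
      have hV : V 0 (PowerSeries.coeff 0 a * PowerSeries.coeff n b) := by
        rw [hsol]
        refine V_sub ?_ (V_sum _ _ fun j hj => ?_)
        · rw [PowerSeries.coeff_one]
          split
          · exact ⟨1, by simp⟩
          · exact ⟨0, by simp⟩
        · have hj' : j < n := Finset.mem_range.mp hj
          obtain ⟨w1, hw1⟩ := V_zero_iff.mp (memS_zero_iff.mp hS0a (j + 1))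
          have hVb := IH (n - (j + 1)) (by omega)
          rw [hw1, mul_comm]
          exact V_mul_iota w1 hVb
      rw [hw0, mul_comm] at hV
      exact V_unit_cancel hunit hV
  exact ⟨hS0a, b, memS_zero_iff.mpr hSb, hab⟩
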